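/- arXiv:1909.07546 — 5 statements merged into one kernel-verified Lean document; each statement's English description precedes it below -/
import Mathlib

section
/- For any complex number z, the supremum of a·z + conj(a)·conj(z) over all complex numbers a with 1/a + 1/conj(a) = 1 equals 2(|z| + Re(z)). -/
open Complex
lemma mem_S (z u : ℂ) (hu : u * (starRingEnd ℂ) u = 1) (ha : (1:ℂ) + u ≠ 0) :
    ∃ a : ℂ, 1 / a + 1 / (starRingEnd ℂ a) = 1 ∧
      a * z + (starRingEnd ℂ a) * (starRingEnd ℂ z) = ((2 * (z.re + (u*z).re) : ℝ) : ℂ) := by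
  have hc : (1:ℂ) + (starRingEnd ℂ) u ≠ 0 := by
    intro h; apply ha
    have := congrArg (starRingEnd ℂ) h
    simpa using this
  refine ⟨1 + u, ?_, ?_⟩
  · simp only [map_add, map_one]
    field_simp
    linear_combination -hu
  · rw [← map_mul, Complex.add_conj]
    push_cast
    rw [add_mul, one_mul, Complex.add_re]
    push_cast
    ring

theorem stmt_1 (z : ℂ) :
    IsLUB
      {r : ℝ | ∃ a : ℂ, 1 / a + 1 / (starRingEnd ℂ a) = 1 ∧
        a * z + (starRingEnd ℂ a) * (starRingEnd ℂ z) = (r : ℂ)}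
      (2 * (‖z‖ + z.re)) := by
  constructor
  · rintro r ⟨a, ha, hr⟩
    have ha0 : a ≠ 0 := by rintro rfl; simp at ha
    have hc0 : (starRingEnd ℂ) a ≠ 0 := by simpa using ha0
    have key : a + (starRingEnd ℂ) a = a * (starRingEnd ℂ) a := by
      field_simp at ha
      linear_combination ha
    have hre : r = 2 * (a*z).re := by
      have h := congrArg Complex.re hr
      rw [← map_mul, Complex.add_conj] at h
      exact_mod_cast h.symm
    have habs : ‖a - 1‖ = 1 := by
      have h2 : ((Complex.normSq (a-1) : ℝ) : ℂ) = 1 := by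
        rw [← Complex.mul_conj]
        simp only [map_sub, map_one]
        linear_combination -key
      have h3 : Complex.normSq (a-1) = 1 := by exact_mod_cast h2
      rw [Complex.norm_def, h3, Real.sqrt_one]
    have hle : ((a-1)*z).re ≤ ‖z‖ := by
      calc ((a-1)*z).re ≤ ‖(a-1)*z‖ := Complex.re_le_norm _
        _ = ‖z‖ := by rw [norm_mul, habs, one_mul]
    have hsplit : (a*z).re = z.re + ((a-1)*z).re := by
      have h4 : a*z = z + (a-1)*z := by ring
      rw [h4, Complex.add_re]
    rw [hre, hsplit]
    linarith
  · intro b hb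
    rcases eq_or_ne z 0 with rfl | hz
    · have h0 := mem_S 0 1 (by simp) (by norm_num)
      have := hb h0
      simp at this ⊢
      linarith
    · refine le_of_forall_pos_le_add ?_
      intro ε hε
      set R := ‖z‖ with hRdef
      have hR0 : 0 < R := norm_pos_iff.mpr hz
      set η := min 1 (Real.sqrt (ε / (2*R))) with hηdef
      have hη0 : 0 < η := lt_min one_pos (Real.sqrt_pos.mpr (by positivity))
      have hη1 : η ≤ 1 := min_le_left _ _
      have hcos : 2*R*(1 - Real.cos η) ≤ ε := by
        have h1 : 1 - η^2/2 ≤ Real.cos η := Real.one_sub_sq_div_two_le_cos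
        have h2 : η^2 ≤ ε/(2*R) := by
          have h3 := min_le_right 1 (Real.sqrt (ε / (2*R)))
          have h4 : (0:ℝ) ≤ ε/(2*R) := by positivity
          nlinarith [Real.sq_sqrt h4, Real.sqrt_nonneg (ε/(2*R))]
        rw [le_div_iff₀ (by positivity)] at h2
        nlinarith
      set w : ℂ := (starRingEnd ℂ) z / (R:ℂ) with hwdef
      have hzz : (starRingEnd ℂ) z * z = ((R^2 : ℝ) : ℂ) := by
        rw [mul_comm, Complex.mul_conj]
        norm_cast
        exact (Complex.sq_norm z).symm
      have hRne : ((R:ℝ) : ℂ) ≠ 0 := by exact_mod_cast hR0.ne'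
      have hwz : w * z = (R:ℂ) := by
        rw [hwdef, div_mul_eq_mul_div, hzz]
        push_cast
        field_simp
      have hww : w * (starRingEnd ℂ) w = 1 := by
        rw [hwdef, map_div₀, Complex.conj_conj, Complex.conj_ofReal,
          div_mul_div_comm, hzz]
        push_cast
        field_simp
      have he : ∀ θ : ℝ, Complex.exp (θ*I) * (starRingEnd ℂ) (Complex.exp (θ*I)) = 1 := by
        intro θ
        rw [← Complex.exp_conj, ← Complex.exp_add]
        simp [Complex.conj_I]
      have hu : ∀ θ : ℝ, (Complex.exp (θ*I)*w) * (starRingEnd ℂ) (Complex.exp (θ*I)*w) = 1 := by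
        intro θ
        rw [map_mul]
        calc Complex.exp (θ*I)*w * ((starRingEnd ℂ) (Complex.exp (θ*I)) * (starRingEnd ℂ) w)
            = (Complex.exp (θ*I) * (starRingEnd ℂ) (Complex.exp (θ*I))) * (w * (starRingEnd ℂ) w) := by ring
          _ = 1 := by rw [he θ, hww, mul_one]
      have hval : ∀ θ : ℝ, ((Complex.exp (θ*I)*w) * z).re = R * Real.cos θ := by
        intro θ
        rw [mul_assoc, hwz]
        have : (Complex.exp (↑θ*I) * (R:ℂ)).re = (Complex.exp (↑θ*I)).re * R := by
          simp [Complex.mul_re]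
        rw [this, Complex.exp_ofReal_mul_I_re, mul_comm]
      have hw0 : w ≠ 0 := by
        rw [hwdef]
        exact div_ne_zero (by simpa using hz) hRne
      have hne : (1:ℂ) + Complex.exp ((η:ℝ)*I)*w ≠ 0 ∨ (1:ℂ) + Complex.exp ((-η:ℝ)*I)*w ≠ 0 := by
        by_contra h
        push_neg at h
        obtain ⟨h1, h2⟩ := h
        have hAB : Complex.exp ((η:ℝ)*I)*w = Complex.exp ((-η:ℝ)*I)*w := by
          have := h1.trans h2.symm
          linear_combination this
        have hexp : Complex.exp ((η:ℝ)*I) = Complex.exp ((-η:ℝ)*I) :=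
          mul_right_cancel₀ hw0 hAB
        have him : Real.sin η = Real.sin (-η) := by
          have h3 := congrArg Complex.im hexp
          rwa [Complex.exp_ofReal_mul_I_im, Complex.exp_ofReal_mul_I_im] at h3
        rw [Real.sin_neg] at him
        have hsin : 0 < Real.sin η :=
          Real.sin_pos_of_pos_of_lt_pi hη0 (by linarith [Real.pi_gt_three])
        linarith
      rcases hne with h | h
      · have hmem := mem_S z _ (hu η) h
        have hble := hb hmem
        rw [hval η] at hble
        linarith
      · have hmem := mem_S z _ (hu (-η)) h
        have hble := hb hmem
        rw [hval (-η), Real.cos_neg] at hble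
        linarith
end

section
/- Let d ≥ 1 be an integer and define r_j = e^{−i jπ/d} for j = 0, ..., d−1. Then for all real θ, ∑_{j=0}^{d-1} sin²(jπ/d − θ)·cos^{2d−2}(jπ/d − θ) = (2d/4^d)·(binom(2d−2, d−1)/d − cos(2dθ)). -/
open Finset Real

lemma rootsum (d : ℕ) (hd : 1 ≤ d) (k : ℤ) :
    ∑ j ∈ Finset.range d, Complex.exp (2 * (Real.pi:ℂ) * Complex.I * (k:ℂ) * (j:ℂ) / (d:ℂ)) =
      if (d:ℤ) ∣ k then (d:ℂ) else 0 := by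
  have hd0 : (d:ℂ) ≠ 0 := Nat.cast_ne_zero.mpr (by omega)
  set z : ℂ := Complex.exp (2 * (Real.pi:ℂ) * Complex.I * (k:ℂ) / (d:ℂ)) with hz
  have hpow : ∀ j : ℕ, Complex.exp (2 * (Real.pi:ℂ) * Complex.I * (k:ℂ) * (j:ℂ) / (d:ℂ)) = z ^ j := by
    intro j
    rw [hz, ← Complex.exp_nat_mul]
    ring_nf
  simp_rw [hpow]
  by_cases h : (d:ℤ) ∣ k
  · have hz1 : z = 1 := by
      obtain ⟨c, hc⟩ := h
      rw [hz, hc]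
      have : 2 * (Real.pi:ℂ) * Complex.I * ((↑(d:ℤ) * c : ℤ):ℂ) / (d:ℂ) = (c:ℂ) * (2 * (Real.pi:ℂ) * Complex.I) := by
        push_cast
        field_simp
      rw [this, Complex.exp_int_mul_two_pi_mul_I]
    simp [hz1, h]
  · have hz1 : z ≠ 1 := by
      intro hz1
      rw [hz, Complex.exp_eq_one_iff] at hz1
      obtain ⟨n, hn⟩ := hz1
      apply h
      refine ⟨n, ?_⟩
      have hπ : (Real.pi:ℂ) ≠ 0 := Complex.ofReal_ne_zero.mpr Real.pi_ne_zero
      have hne : (2 * (Real.pi:ℂ) * Complex.I) ≠ 0 := by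
        simp [hπ, Complex.I_ne_zero]
      have h2 : (2 * (Real.pi:ℂ) * Complex.I) * (k:ℂ) = (2 * (Real.pi:ℂ) * Complex.I) * ((d:ℂ) * (n:ℂ)) := by
        field_simp at hn
        linear_combination (2 * (Real.pi:ℂ) * Complex.I) * hn
      have : (k:ℂ) = ((d * n : ℤ):ℂ) := by
        push_cast
        exact mul_left_cancel₀ hne h2
      exact_mod_cast this
    have hzd : z ^ d = 1 := by
      rw [hz, ← Complex.exp_nat_mul]
      have : (d:ℂ) * (2 * (Real.pi:ℂ) * Complex.I * (k:ℂ) / (d:ℂ)) = (k:ℂ) * (2 * (Real.pi:ℂ) * Complex.I) := by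
        field_simp
      rw [this, Complex.exp_int_mul_two_pi_mul_I]
    rw [geom_sum_eq hz1, hzd]
    simp [h]

lemma cospow (n : ℕ) (φ : ℝ) :
    (4:ℂ)^n * ((Real.cos φ : ℂ))^(2*n) =
      ∑ m ∈ Finset.range (2*n+1), (Nat.choose (2*n) m : ℂ) *
        Complex.exp (Complex.I * (2*(m:ℂ) - 2*(n:ℂ)) * (φ:ℂ)) := by
  have h1 : (4:ℂ)^n * ((Real.cos φ : ℂ))^(2*n) = ((2:ℂ) * (Real.cos φ : ℂ))^(2*n) := by
    rw [mul_pow, pow_mul]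
    norm_num
    left
    rw [pow_mul]
    norm_num
  have h2 : (2:ℂ) * (Real.cos φ : ℂ) = Complex.exp ((φ:ℂ) * Complex.I) + Complex.exp (-(φ:ℂ) * Complex.I) := by
    rw [Complex.ofReal_cos, Complex.cos]
    ring
  rw [h1, h2, add_pow]
  apply Finset.sum_congr rfl
  intro m hm
  rw [Finset.mem_range] at hm
  have hm' : m ≤ 2*n := by omega
  rw [← Complex.exp_nat_mul, ← Complex.exp_nat_mul, ← Complex.exp_add]
  rw [mul_comm]
  congr 1
  have : ((2*n - m : ℕ) : ℂ) = 2*(n:ℂ) - (m:ℂ) := by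
    push_cast [Nat.cast_sub hm']
    ring
  rw [this]
  ring

lemma sumcos (d : ℕ) (hd : 1 ≤ d) (θ : ℝ) (n : ℕ) :
    (4:ℂ)^n * ∑ j ∈ Finset.range d, ((Real.cos ((j:ℝ) * π / d - θ) : ℂ))^(2*n) =
      ∑ m ∈ Finset.range (2*n+1), (Nat.choose (2*n) m : ℂ) *
        Complex.exp (Complex.I * (2*(m:ℂ) - 2*(n:ℂ)) * (-θ:ℂ)) *
        (if (d:ℤ) ∣ ((m:ℤ) - (n:ℤ)) then (d:ℂ) else 0) := by
  have hd0 : (d:ℝ) ≠ 0 := Nat.cast_ne_zero.mpr (by omega)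
  rw [Finset.mul_sum]
  simp_rw [cospow]
  rw [Finset.sum_comm]
  apply Finset.sum_congr rfl
  intro m hm
  rw [mul_assoc, ← rootsum d hd ((m:ℤ) - (n:ℤ)), Finset.mul_sum, Finset.mul_sum]
  apply Finset.sum_congr rfl
  intro j hj
  rw [mul_assoc]
  congr 1
  rw [← Complex.exp_add]
  congr 1
  have hd0' : (d:ℂ) ≠ 0 := Nat.cast_ne_zero.mpr (by omega)
  push_cast
  field_simp
  ring

lemma S1c (e : ℕ) (θ : ℝ) :
    (4:ℂ)^e * ∑ j ∈ Finset.range (e+1), ((Real.cos ((j:ℝ) * π / ((e+1:ℕ):ℝ) - θ) : ℂ))^(2*e) =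
      (Nat.choose (2*e) e : ℂ) * (e+1) := by
  rw [sumcos (e+1) (by omega) θ e]
  rw [Finset.sum_eq_single e]
  · have : ((e+1:ℕ):ℤ) ∣ ((e:ℤ) - (e:ℤ)) := by simp
    rw [if_pos this]
    have : Complex.I * (2*(e:ℂ) - 2*(e:ℂ)) * (-θ:ℂ) = 0 := by ring
    rw [this, Complex.exp_zero]
    push_cast
    ring
  · intro m hm hne
    rw [Finset.mem_range] at hm
    rw [if_neg, mul_zero]
    intro hdvd
    have h0 : (m:ℤ) - (e:ℤ) = 0 :=
      Int.eq_zero_of_dvd_of_natAbs_lt_natAbs hdvd (by omega)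
    omega
  · intro h
    exfalso; apply h
    rw [Finset.mem_range]; omega

lemma S2c (e : ℕ) (θ : ℝ) :
    (4:ℂ)^(e+1) * ∑ j ∈ Finset.range (e+1), ((Real.cos ((j:ℝ) * π / ((e+1:ℕ):ℝ) - θ) : ℂ))^(2*(e+1)) =
      (((e+1:ℕ)):ℂ) * ((Nat.choose (2*(e+1)) (e+1) : ℂ) + 2 * (Real.cos (2*((e+1:ℕ):ℝ)*θ) : ℂ)) := by
  rw [sumcos (e+1) (by omega) θ (e+1)]
  set d := e + 1 with hdd
  have hsub : ({0, d, 2*d} : Finset ℕ) ⊆ Finset.range (2*d+1) := by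
    intro x hx
    simp only [Finset.mem_insert, Finset.mem_singleton] at hx
    rw [Finset.mem_range]
    rcases hx with h|h|h <;> omega
  rw [← Finset.sum_subset hsub]
  · have h0d : (0:ℕ) ≠ d := by omega
    have h02d : (0:ℕ) ≠ 2*d := by omega
    have hd2d : d ≠ 2*d := by omega
    rw [Finset.sum_insert (by simp [h0d, h02d]), Finset.sum_insert (by simp [hd2d]),
      Finset.sum_singleton]
    have hdvd0 : ((d:ℕ):ℤ) ∣ (((0:ℕ):ℤ) - (d:ℤ)) := by simp
    have hdvdd : ((d:ℕ):ℤ) ∣ ((d:ℤ) - (d:ℤ)) := by simp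
    have hdvd2 : ((d:ℕ):ℤ) ∣ (((2*d:ℕ):ℤ) - (d:ℤ)) := by push_cast; simp [two_mul]
    rw [if_pos hdvd0, if_pos hdvdd, if_pos hdvd2]
    have e1 : Complex.I * (2*((0:ℕ):ℂ) - 2*(d:ℂ)) * (-θ:ℂ) = (2*(d:ℝ)*θ : ℝ) * Complex.I := by
      push_cast; ring
    have e2 : Complex.I * (2*(d:ℂ) - 2*(d:ℂ)) * (-θ:ℂ) = 0 := by ring
    have e3 : Complex.I * (2*((2*d:ℕ):ℂ) - 2*(d:ℂ)) * (-θ:ℂ) = -(2*(d:ℝ)*θ : ℝ) * Complex.I := by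
      push_cast; ring
    rw [e1, e2, e3, Complex.exp_zero]
    have hcos : Complex.exp ((2*(d:ℝ)*θ : ℝ) * Complex.I) + Complex.exp (-(2*(d:ℝ)*θ : ℝ) * Complex.I)
        = 2 * (Real.cos (2*(d:ℝ)*θ) : ℂ) := by
      rw [Complex.ofReal_cos, Complex.cos]
      ring
    simp only [Nat.choose_zero_right, Nat.choose_self, Nat.cast_one, one_mul, mul_one]
    linear_combination ((d:ℕ):ℂ) * hcos
  · intro m hm hnot
    rw [Finset.mem_range] at hm
    simp only [Finset.mem_insert, Finset.mem_singleton, not_or] at hnot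
    obtain ⟨h0, hd1, h2d⟩ := hnot
    rw [if_neg, mul_zero]
    intro hdvd
    have hd1' : 1 ≤ d := by omega
    have h0' : (m:ℤ) - (d:ℤ) = 0 :=
      Int.eq_zero_of_dvd_of_natAbs_lt_natAbs hdvd (by omega)
    omega

theorem stmt_6 (d : ℕ) (hd : 1 ≤ d) (r : ℕ → ℂ)
    (hr : ∀ j, r j = Complex.exp (-(Complex.I * (j : ℂ) * Real.pi / (d : ℂ)))) (θ : ℝ) :
    ∑ j ∈ Finset.range d,
        Real.sin ((j : ℝ) * π / d - θ) ^ 2 * Real.cos ((j : ℝ) * π / d - θ) ^ (2 * d - 2) =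
      (2 * (d : ℝ) / 4 ^ d) *
        ((Nat.choose (2 * d - 2) (d - 1) : ℝ) / (d : ℝ) - Real.cos (2 * d * θ)) := by
  obtain ⟨e, rfl⟩ : ∃ e, d = e + 1 := ⟨d - 1, by omega⟩
  simp only [show 2*(e+1)-2 = 2*e from by omega, show (e+1)-1 = e from by omega]
  set S1 : ℝ := ∑ j ∈ Finset.range (e+1), Real.cos ((j:ℝ) * π / ((e+1:ℕ):ℝ) - θ)^(2*e) with hS1
  set S2 : ℝ := ∑ j ∈ Finset.range (e+1), Real.cos ((j:ℝ) * π / ((e+1:ℕ):ℝ) - θ)^(2*(e+1)) with hS2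
  have hL : ∑ j ∈ Finset.range (e+1),
      Real.sin ((j : ℝ) * π / ((e+1:ℕ):ℝ) - θ) ^ 2 * Real.cos ((j : ℝ) * π / ((e+1:ℕ):ℝ) - θ) ^ (2*e)
      = S1 - S2 := by
    rw [hS1, hS2, ← Finset.sum_sub_distrib]
    refine Finset.sum_congr rfl fun j _ => ?_
    rw [Real.sin_sq, show 2*(e+1) = 2*e+2 from by ring, pow_add]
    ring
  rw [hL]
  have r1 : (4:ℝ)^e * S1 = (Nat.choose (2*e) e : ℝ) * ((e:ℝ)+1) := by
    have h := S1c e θ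
    have : (((4:ℝ)^e * S1 : ℝ) : ℂ) = (((Nat.choose (2*e) e : ℝ) * ((e:ℝ)+1) : ℝ) : ℂ) := by
      push_cast
      push_cast at h
      convert h using 2
      rw [hS1]
      push_cast [Complex.ofReal_cos]
      rfl

    exact_mod_cast this
  have r2 : (4:ℝ)^(e+1) * S2 = ((e:ℝ)+1) * ((Nat.choose (2*(e+1)) (e+1) : ℝ) + 2 * Real.cos (2*((e:ℝ)+1)*θ)) := by
    have h := S2c e θ
    have : (((4:ℝ)^(e+1) * S2 : ℝ) : ℂ) = ((((e:ℝ)+1) * ((Nat.choose (2*(e+1)) (e+1) : ℝ) + 2 * Real.cos (2*((e:ℝ)+1)*θ)) : ℝ) : ℂ) := by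
      push_cast
      push_cast at h
      convert h using 2
      rw [hS2]
      push_cast [Complex.ofReal_cos]
      rfl

    exact_mod_cast this
  have hb : (e+1) * Nat.choose (2*(e+1)) (e+1) = 2*(2*e+1) * Nat.choose (2*e) e := by
    have h := Nat.succ_mul_centralBinom_succ e
    simpa [Nat.centralBinom, Nat.mul_succ] using h
  have hbR : ((e:ℝ)+1) * (Nat.choose (2*(e+1)) (e+1) : ℝ) = (2*(2*(e:ℝ)+1)) * (Nat.choose (2*e) e : ℝ) := by
    exact_mod_cast hb
  have hP : (0:ℝ) < 4^e := by positivity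
  have he1 : (0:ℝ) < (e:ℝ)+1 := by positivity
  have key : (4*(4:ℝ)^e) * (S1 - S2) * ((e:ℝ)+1) =
      2*((e:ℝ)+1) * ((Nat.choose (2*e) e : ℝ) - ((e:ℝ)+1) * Real.cos (2*((e:ℝ)+1)*θ)) := by
    rw [pow_succ] at r2
    linear_combination (4*((e:ℝ)+1))*r1 - ((e:ℝ)+1)*r2 - ((e:ℝ)+1)*hbR
  push_cast
  rw [pow_succ]
  have hne : (4:ℝ)^e * 4 * ((e:ℝ)+1) ≠ 0 := by positivity
  field_simp
  have key2 : 4*(4:ℝ)^e*(S1-S2) = 2*((Nat.choose (2*e) e : ℝ) - ((e:ℝ)+1)*Real.cos (2*((e:ℝ)+1)*θ)) := by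
    apply mul_right_cancel₀ he1.ne'; linear_combination key
  linear_combination key2
end

section
/- For every positive integer k and every homogeneous polynomial p of degree k in two variables, ∬_{x²+y²≤1} Δp(x,y) dx dy = k(k+2) ∬_{x²+y²≤1} p(x,y) dx dy, where Δ is the Laplacian. -/
/-!
Both sides are linear in `p`, so it suffices to treat a monomial `x ^ a * y ^ b` with
`a + b = k`. In polar coordinates its integral over the disk is `C a b / (a + b + 2)`, where
`C a b = ∫_{-π}^{π} cos ^ a θ * sin ^ b θ dθ`. Integrating the derivative of
`cos ^ (a + 1) * sin ^ (b + 1)` over a period and using `cos ^ 2 + sin ^ 2 = 1` gives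
`(a + b + 2) * C (a + 2) b = (a + 1) * C a b` and its mirror image. Hence the `∂²/∂x²` part of the
Laplacian integrates to `a * C a b` and the `∂²/∂y²` part to `b * C a b`, and their sum
`(a + b) * C a b` is `k * (k + 2)` times the disk integral of the monomial.
-/

open MvPolynomial MeasureTheory Real intervalIntegral

noncomputable def circleMoment (a b : ℕ) : ℝ := ∫ θ in -π..π, cos θ ^ a * sin θ ^ b

lemma intervalIntegrable_cos_pow_mul_sin_pow (a b : ℕ) :
    IntervalIntegrable (fun θ => cos θ ^ a * sin θ ^ b) volume (-π) π :=
  (by fun_prop : Continuous fun θ => cos θ ^ a * sin θ ^ b).intervalIntegrable _ _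

lemma integral_neg_pi_pi_eq_zero_of_hasDerivAt {f f' : ℝ → ℝ}
    (hf : ∀ x, HasDerivAt f (f' x) x) (hf' : IntervalIntegrable f' volume (-π) π)
    (hper : f (-π) = f π) : ∫ θ in -π..π, f' θ = 0 := by
  rw [integral_eq_sub_of_hasDerivAt (fun x _ => hf x) hf', hper, sub_self]

lemma circleMoment_one_left (b : ℕ) : circleMoment 1 b = 0 := by
  refine integral_neg_pi_pi_eq_zero_of_hasDerivAt
    (f := fun θ => sin θ ^ (b + 1) / (b + 1)) (fun θ => ?_)
    (intervalIntegrable_cos_pow_mul_sin_pow 1 b) (by simp)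
  refine (((hasDerivAt_sin θ).fun_pow (b + 1)).div_const (b + 1)).congr_deriv ?_
  push_cast
  field_simp

lemma circleMoment_one_right (a : ℕ) : circleMoment a 1 = 0 := by
  refine integral_neg_pi_pi_eq_zero_of_hasDerivAt
    (f := fun θ => cos θ ^ (a + 1) / -(a + 1)) (fun θ => ?_)
    (intervalIntegrable_cos_pow_mul_sin_pow a 1) (by simp)
  refine (((hasDerivAt_cos θ).fun_pow (a + 1)).div_const (-(a + 1))).congr_deriv ?_
  push_cast
  field_simp

lemma circleMoment_add_two_left_add_right (a b : ℕ) :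
    circleMoment (a + 2) b + circleMoment a (b + 2) = circleMoment a b := by
  rw [circleMoment, circleMoment, circleMoment,
    ← integral_add (intervalIntegrable_cos_pow_mul_sin_pow _ _)
      (intervalIntegrable_cos_pow_mul_sin_pow _ _)]
  congr 1 with θ
  linear_combination cos θ ^ a * sin θ ^ b * cos_sq_add_sin_sq θ

lemma succ_mul_circleMoment_add_two_left (a b : ℕ) :
    (b + 1 : ℝ) * circleMoment (a + 2) b = (a + 1) * circleMoment a (b + 2) := by
  have hderiv (θ : ℝ) : HasDerivAt (fun θ => cos θ ^ (a + 1) * sin θ ^ (b + 1))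
      ((b + 1) * (cos θ ^ (a + 2) * sin θ ^ b) - (a + 1) * (cos θ ^ a * sin θ ^ (b + 2))) θ := by
    refine (((hasDerivAt_cos θ).fun_pow (a + 1)).fun_mul
      ((hasDerivAt_sin θ).fun_pow (b + 1))).congr_deriv ?_
    simp only [Nat.add_sub_cancel]
    push_cast
    ring
  have h := integral_neg_pi_pi_eq_zero_of_hasDerivAt hderiv
    (((intervalIntegrable_cos_pow_mul_sin_pow _ _).const_mul _).sub
      ((intervalIntegrable_cos_pow_mul_sin_pow _ _).const_mul _)) (by simp)
  rw [integral_sub ((intervalIntegrable_cos_pow_mul_sin_pow _ _).const_mul _)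
    ((intervalIntegrable_cos_pow_mul_sin_pow _ _).const_mul _), intervalIntegral.integral_const_mul,
    intervalIntegral.integral_const_mul] at h
  exact sub_eq_zero.mp h

lemma circleMoment_add_two_left (a b : ℕ) :
    circleMoment (a + 2) b = (a + 1) / (a + b + 2) * circleMoment a b := by
  have := succ_mul_circleMoment_add_two_left a b
  rw [← circleMoment_add_two_left_add_right a b]
  field_simp
  linear_combination this

lemma circleMoment_add_two_right (a b : ℕ) :
    circleMoment a (b + 2) = (b + 1) / (a + b + 2) * circleMoment a b := by
  have := succ_mul_circleMoment_add_two_left a b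
  rw [← circleMoment_add_two_left_add_right a b]
  field_simp
  linear_combination -this

lemma setIntegral_unitDisk_eq_polar {E : Type*} [NormedAddCommGroup E] [NormedSpace ℝ E]
    (f : ℝ × ℝ → E) :
    ∫ z in {z : ℝ × ℝ | z.1 ^ 2 + z.2 ^ 2 ≤ 1}, f z =
      ∫ p in Set.Ioc 0 1 ×ˢ Set.Ioo (-π) π, p.1 • f (p.1 * cos p.2, p.1 * sin p.2) := by
  set D := {z : ℝ × ℝ | z.1 ^ 2 + z.2 ^ 2 ≤ 1}
  have hD : MeasurableSet D := measurableSet_le (by fun_prop) (by fun_prop)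
  have hnorm (p : ℝ × ℝ) : polarCoord.symm p ∈ D ↔ p.1 ^ 2 ≤ 1 := by
    simp only [D, Set.mem_ofPred_eq, polarCoord_symm_apply]
    rw [show (p.1 * cos p.2) ^ 2 + (p.1 * sin p.2) ^ 2 = p.1 ^ 2 by
      linear_combination p.1 ^ 2 * cos_sq_add_sin_sq p.2]
  have hpolar : polarCoord.target ∩ polarCoord.symm ⁻¹' D = Set.Ioc 0 1 ×ˢ Set.Ioo (-π) π := by
    ext ⟨r, θ⟩
    simp only [polarCoord_target, Set.mem_inter_iff, Set.mem_preimage, hnorm, Set.mem_prod,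
      Set.mem_Ioi, Set.mem_Ioc]
    constructor
    · rintro ⟨⟨hr, hθ⟩, hr1⟩
      exact ⟨⟨hr, (sq_le_one_iff₀ hr.le).mp hr1⟩, hθ⟩
    · rintro ⟨⟨hr, hr1⟩, hθ⟩
      exact ⟨⟨hr, hθ⟩, (sq_le_one_iff₀ hr.le).mpr hr1⟩
  rw [← MeasureTheory.integral_indicator hD, ← integral_comp_polarCoord_symm]
  simp_rw [← Set.indicator_comp_right, ← Set.indicator_smul_apply]
  rw [setIntegral_indicator (hD.preimage continuous_polarCoord_symm.measurable), hpolar]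
  rfl

def unitDisk : Set (Fin 2 → ℝ) := {v | v 0 ^ 2 + v 1 ^ 2 ≤ 1}

noncomputable def diskMoment (a b : ℕ) : ℝ := ∫ v in unitDisk, v 0 ^ a * v 1 ^ b

lemma diskMoment_eq_circleMoment_div (a b : ℕ) :
    diskMoment a b = circleMoment a b / (a + b + 2) := by
  have hpre : MeasurableEquiv.finTwoArrow ⁻¹' {z : ℝ × ℝ | z.1 ^ 2 + z.2 ^ 2 ≤ 1} = unitDisk := rfl
  have hradial : ∫ r in Set.Ioc (0 : ℝ) 1, r ^ (a + b + 1) = 1 / (a + b + 2) := by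
    rw [← intervalIntegral.integral_of_le zero_le_one, integral_pow]
    push_cast
    ring
  have hangular : ∫ θ in Set.Ioo (-π) π, cos θ ^ a * sin θ ^ b = circleMoment a b := by
    rw [← integral_Ioc_eq_integral_Ioo, ← intervalIntegral.integral_of_le (by linarith [pi_pos])]
    rfl
  calc diskMoment a b = ∫ z in {z : ℝ × ℝ | z.1 ^ 2 + z.2 ^ 2 ≤ 1}, z.1 ^ a * z.2 ^ b := by
        rw [diskMoment, ← hpre, ← (volume_preserving_finTwoArrow ℝ).setIntegral_preimage_emb
          MeasurableEquiv.finTwoArrow.measurableEmbedding]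
        rfl
    _ = ∫ p in Set.Ioc 0 1 ×ˢ Set.Ioo (-π) π, p.1 ^ (a + b + 1) * (cos p.2 ^ a * sin p.2 ^ b) := by
        rw [setIntegral_unitDisk_eq_polar]
        congr 1 with p
        simp only [smul_eq_mul]
        ring
    _ = circleMoment a b / (a + b + 2) := by
        rw [Measure.volume_eq_prod, setIntegral_prod_mul (fun r : ℝ => r ^ (a + b + 1))
          (fun θ => cos θ ^ a * sin θ ^ b), hradial, hangular]
        ring

lemma mul_pred_mul_diskMoment_sub_two_left (a b : ℕ) :
    (a * (a - 1 : ℕ) : ℝ) * diskMoment (a - 2) b = a * circleMoment a b := by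
  match a with
  | 0 => simp
  | 1 => simp [circleMoment_one_left]
  | a + 2 =>
    rw [diskMoment_eq_circleMoment_div, circleMoment_add_two_left]
    push_cast
    field_simp

lemma mul_pred_mul_diskMoment_sub_two_right (a b : ℕ) :
    (b * (b - 1 : ℕ) : ℝ) * diskMoment a (b - 2) = b * circleMoment a b := by
  match b with
  | 0 => simp
  | 1 => simp [circleMoment_one_right]
  | b + 2 =>
    rw [diskMoment_eq_circleMoment_div, circleMoment_add_two_right]
    push_cast
    field_simp

lemma diskMoment_laplacian_identity (a b : ℕ) :
    (a * (a - 1 : ℕ) : ℝ) * diskMoment (a - 2) b + (b * (b - 1 : ℕ) : ℝ) * diskMoment a (b - 2) =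
      (a + b) * (a + b + 2) * diskMoment a b := by
  rw [mul_pred_mul_diskMoment_sub_two_left, mul_pred_mul_diskMoment_sub_two_right,
    diskMoment_eq_circleMoment_div]
  field_simp

lemma isCompact_unitDisk : IsCompact unitDisk := by
  refine Metric.isCompact_of_isClosed_isBounded (isClosed_le (by fun_prop) (by fun_prop))
    ((Metric.isBounded_closedBall (x := 0) (r := 1)).subset fun v hv => ?_)
  have hv : v 0 ^ 2 + v 1 ^ 2 ≤ 1 := hv
  rw [mem_closedBall_zero_iff, pi_norm_le_iff_of_nonneg zero_le_one, Fin.forall_fin_two]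
  simp only [Real.norm_eq_abs, ← sq_le_one_iff_abs_le_one]
  constructor <;> nlinarith [sq_nonneg (v 0), sq_nonneg (v 1)]

lemma integrableOn_unitDisk_eval (q : MvPolynomial (Fin 2) ℝ) :
    IntegrableOn (fun v => eval v q) unitDisk :=
  (continuous_eval q).continuousOn.integrableOn_compact isCompact_unitDisk

noncomputable def diskIntegral : MvPolynomial (Fin 2) ℝ →ₗ[ℝ] ℝ where
  toFun q := ∫ v in unitDisk, eval v q
  map_add' q r := by
    simp only [map_add]
    exact integral_add (integrableOn_unitDisk_eval q) (integrableOn_unitDisk_eval r)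
  map_smul' c q := by
    simp only [smul_eval, RingHom.id_apply, smul_eq_mul]
    exact integral_const_mul c _

noncomputable def laplacian : MvPolynomial (Fin 2) ℝ →ₗ[ℝ] MvPolynomial (Fin 2) ℝ :=
  (pderiv (0 : Fin 2)).toLinearMap ∘ₗ (pderiv 0).toLinearMap +
    (pderiv (1 : Fin 2)).toLinearMap ∘ₗ (pderiv 1).toLinearMap

lemma pderiv_pderiv_monomial (i : Fin 2) (m : Fin 2 →₀ ℕ) (c : ℝ) :
    pderiv i (pderiv i (monomial m c)) =
      monomial (m - Finsupp.single i 2) (c * (m i * (m i - 1 : ℕ) : ℝ)) := by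
  simp only [pderiv_monomial, tsub_tsub, ← Finsupp.single_add, Finsupp.tsub_apply,
    Finsupp.single_eq_same, mul_assoc]

lemma diskIntegral_monomial (m : Fin 2 →₀ ℕ) (c : ℝ) :
    diskIntegral (monomial m c) = c * diskMoment (m 0) (m 1) := by
  simp only [diskIntegral, LinearMap.coe_mk, AddHom.coe_mk, eval_monomial,
    Finsupp.prod_fintype _ _ (fun i => pow_zero _), Fin.prod_univ_two]
  exact integral_const_mul c _

lemma diskIntegral_laplacian_monomial (m : Fin 2 →₀ ℕ) (c : ℝ) :
    diskIntegral (laplacian (monomial m c)) =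
      (m 0 + m 1) * (m 0 + m 1 + 2) * diskIntegral (monomial m c) := by
  simp only [laplacian, LinearMap.add_apply, LinearMap.comp_apply, Derivation.coeFn_coe,
    pderiv_pderiv_monomial, map_add, diskIntegral_monomial]
  simp only [Fin.isValue, Finsupp.coe_tsub, Pi.sub_apply, Finsupp.single_eq_same, ne_eq,
    one_ne_zero, not_false_eq_true, Finsupp.single_eq_of_ne, tsub_zero, zero_ne_one]
  linear_combination c * diskMoment_laplacian_identity (m 0) (m 1)

theorem stmt_11_general (k : ℕ) (p : MvPolynomial (Fin 2) ℝ)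
    (hp : p.IsHomogeneous k) :
    ∫ v in {v : Fin 2 → ℝ | (v 0) ^ 2 + (v 1) ^ 2 ≤ 1},
        eval v (pderiv 0 (pderiv 0 p) + pderiv 1 (pderiv 1 p)) =
      (k : ℝ) * ((k : ℝ) + 2) *
        ∫ v in {v : Fin 2 → ℝ | (v 0) ^ 2 + (v 1) ^ 2 ≤ 1}, eval v p := by
  change diskIntegral (laplacian p) = _ * diskIntegral p
  rw [← p.support_sum_monomial_coeff]
  simp only [map_sum, Finset.mul_sum]
  refine Finset.sum_congr rfl fun m hm => ?_
  have hdeg : m 0 + m 1 = k := by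
    rw [← hp (mem_support_iff.mp hm)]
    simp only [Finsupp.weight_apply, Pi.one_apply, smul_eq_mul, mul_one, Finsupp.sum_fintype,
      Fin.sum_univ_two, implies_true]
  rw [← hdeg]
  exact_mod_cast diskIntegral_laplacian_monomial m _

theorem stmt_11 (k : ℕ) (hk : 1 ≤ k) (p : MvPolynomial (Fin 2) ℝ)
    (hp : p.IsHomogeneous k) :
    ∫ v in {v : Fin 2 → ℝ | (v 0) ^ 2 + (v 1) ^ 2 ≤ 1},
        eval v (pderiv 0 (pderiv 0 p) + pderiv 1 (pderiv 1 p)) =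
      (k : ℝ) * ((k : ℝ) + 2) *
        ∫ v in {v : Fin 2 → ℝ | (v 0) ^ 2 + (v 1) ^ 2 ≤ 1}, eval v p :=
  stmt_11_general k p hp
end

section
/- Let p be a homogeneous polynomial of degree 2d in 4 variables and suppose vectors v_1, ..., v_8 ∈ ℝ⁴ and signs α_2, ..., α_8 ∈ {−1, 1} satisfy v_1 v_1ᵀ = ∑_{i=2}^{8} α_i v_i v_iᵀ. If the associated biform Q_p satisfies |Q_p(x, y)| ≤ sqrt(p(x) p(y)) for all x, y ∈ ℝ⁴ (with p nonnegative), then p(v_1) ≤ (∑_{i=2}^{8} sqrt(p(v_i)))². -/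
/-! Apply `L` to the square of the rank-one identity: `p(v₀) = L(v₀v₀ᵀ, v₀v₀ᵀ)` expands into
`∑ᵢⱼ αᵢ αⱼ Q(vᵢ, vⱼ)`, and the Cauchy–Schwarz-type bound controls each term by `√p(vᵢ) √p(vⱼ)`. -/

open MvPolynomial Finset Matrix

theorem LinearMap.apply_sum_smul_sum_smul_le_sq_sum {ι M : Type*} [AddCommMonoid M] [Module ℝ M]
    (B : M →ₗ[ℝ] M →ₗ[ℝ] ℝ) (s : Finset ι) (α : ι → ℝ) (hα : ∀ i ∈ s, |α i| ≤ 1)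
    (w : ι → M) (c : ι → ℝ) (hB : ∀ i ∈ s, ∀ j ∈ s, |B (w i) (w j)| ≤ c i * c j) :
    B (∑ i ∈ s, α i • w i) (∑ j ∈ s, α j • w j) ≤ (∑ i ∈ s, c i) ^ 2 := by
  calc B (∑ i ∈ s, α i • w i) (∑ j ∈ s, α j • w j)
      = ∑ i ∈ s, ∑ j ∈ s, α i * α j * B (w i) (w j) := by
        simp only [map_sum, LinearMap.sum_apply, map_smul, LinearMap.smul_apply, smul_eq_mul,
          mul_sum]
        rw [sum_comm]
        exact sum_congr rfl fun i _ => sum_congr rfl fun j _ => by ring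
    _ ≤ ∑ i ∈ s, ∑ j ∈ s, c i * c j := by
        refine sum_le_sum fun i hi => sum_le_sum fun j hj => ?_
        calc α i * α j * B (w i) (w j) ≤ |α i| * |α j| * |B (w i) (w j)| := by
              rw [← abs_mul, ← abs_mul]; exact le_abs_self _
          _ ≤ 1 * 1 * (c i * c j) := by gcongr; exacts [hα i hi, hα j hj, hB i hi j hj]
          _ = c i * c j := by ring
    _ = (∑ i ∈ s, c i) ^ 2 := by rw [sq, sum_mul_sum]

theorem stmt_17_general (p : MvPolynomial (Fin 4) ℝ)
    (hnonneg : ∀ x : Fin 4 → ℝ, 0 ≤ eval x p)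
    (L : Matrix (Fin 4) (Fin 4) ℝ →ₗ[ℝ] Matrix (Fin 4) (Fin 4) ℝ →ₗ[ℝ] ℝ)
    (hdiag : ∀ x : Fin 4 → ℝ, L (vecMulVec x x) (vecMulVec x x) = eval x p)
    (hCS : ∀ x y : Fin 4 → ℝ,
      |L (vecMulVec x x) (vecMulVec y y)| ≤ Real.sqrt (eval x p * eval y p))
    (v : Fin 8 → (Fin 4 → ℝ)) (α : Fin 8 → ℝ)
    (hα : ∀ i, α i = 1 ∨ α i = -1)
    (hrel : vecMulVec (v 0) (v 0) =
      ∑ i ∈ Finset.univ.erase (0 : Fin 8), α i • vecMulVec (v i) (v i)) :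
    eval (v 0) p ≤
      (∑ i ∈ Finset.univ.erase (0 : Fin 8), Real.sqrt (eval (v i) p)) ^ 2 := by
  have hα_abs : ∀ i ∈ univ.erase (0 : Fin 8), |α i| ≤ 1 := fun i _ => by
    rcases hα i with h | h <;> simp [h]
  rw [← hdiag (v 0), hrel]
  exact L.apply_sum_smul_sum_smul_le_sq_sum _ α hα_abs _ _ fun i _ j _ =>
    (hCS _ _).trans_eq (Real.sqrt_mul (hnonneg _) _)

theorem stmt_17 (p : MvPolynomial (Fin 4) ℝ) (hp : p.IsHomogeneous 4)
    (hnonneg : ∀ x : Fin 4 → ℝ, 0 ≤ eval x p)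
    (L : Matrix (Fin 4) (Fin 4) ℝ →ₗ[ℝ] Matrix (Fin 4) (Fin 4) ℝ →ₗ[ℝ] ℝ)
    (hsym : ∀ M N, L M N = L N M)
    (hdiag : ∀ x : Fin 4 → ℝ, L (vecMulVec x x) (vecMulVec x x) = eval x p)
    (hCS : ∀ x y : Fin 4 → ℝ,
      |L (vecMulVec x x) (vecMulVec y y)| ≤ Real.sqrt (eval x p * eval y p))
    (v : Fin 8 → (Fin 4 → ℝ)) (α : Fin 8 → ℝ)
    (hα : ∀ i, α i = 1 ∨ α i = -1)
    (hrel : vecMulVec (v 0) (v 0) =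
      ∑ i ∈ Finset.univ.erase (0 : Fin 8), α i • vecMulVec (v i) (v i)) :
    eval (v 0) p ≤
      (∑ i ∈ Finset.univ.erase (0 : Fin 8), Real.sqrt (eval (v i) p)) ^ 2 :=
  stmt_17_general p hnonneg L hdiag hCS v α hα hrel
end

section
/- If a nonnegative form p of degree 2d in n variables satisfies Re(p(z)) ≤ B·Q_p(z, conj(z)) for all z ∈ ℂⁿ, then |p(z)| ≤ B·Q_p(z, conj(z)) for all z ∈ ℂⁿ, where Q_p is the (complexified) biform of p. -/
open MvPolynomial

lemma eval_smul_of_isHomogeneous {n m : ℕ} (φ : MvPolynomial (Fin n) ℂ)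
    (hφ : φ.IsHomogeneous m) (a : ℂ) (z : Fin n → ℂ) :
    eval (a • z) φ = a ^ m * eval z φ := by
  rw [eval_eq', eval_eq', Finset.mul_sum]
  refine Finset.sum_congr rfl fun k hk => ?_
  have hdeg : ∑ i, k i = m := by
    have h1 := hφ (MvPolynomial.mem_support_iff.mp hk)
    rw [← h1]
    simp [Finsupp.weight_apply, Finsupp.sum]
    rw [Finset.sum_subset (Finset.subset_univ k.support)]
    intro x _ hx
    simpa using Finsupp.notMem_support_iff.mp hx
  calc coeff k φ * ∏ i, (a • z) i ^ k i
      = coeff k φ * ∏ i, (a ^ k i * z i ^ k i) := by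
        simp [mul_pow]
    _ = coeff k φ * ((∏ i, a ^ k i) * ∏ i, z i ^ k i) := by
        rw [Finset.prod_mul_distrib]
    _ = a ^ m * (coeff k φ * ∏ i, z i ^ k i) := by
        rw [Finset.prod_pow_eq_pow_sum, hdeg]; ring

theorem stmt_19 (n d : ℕ) (hd : 1 ≤ d) (p : MvPolynomial (Fin n) ℝ)
    (hp : p.IsHomogeneous (2 * d))
    (hnonneg : ∀ x : Fin n → ℝ, 0 ≤ eval x p)
    (Q : (Fin n → ℂ) → (Fin n → ℂ) → ℂ)
    (hQ1 : ∀ (a : ℂ) (z w : Fin n → ℂ), Q (a • z) w = a ^ d * Q z w)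
    (hQ2 : ∀ (a : ℂ) (z w : Fin n → ℂ), Q z (a • w) = a ^ d * Q z w)
    (hQdiag : ∀ z : Fin n → ℂ, Q z z = eval z (p.map (algebraMap ℝ ℂ)))
    (B : ℝ)
    (h : ∀ z : Fin n → ℂ,
      (eval z (p.map (algebraMap ℝ ℂ))).re ≤
        B * (Q z (fun i => starRingEnd ℂ (z i))).re) :
    ∀ z : Fin n → ℂ,
      ‖eval z (p.map (algebraMap ℝ ℂ))‖ ≤
        B * (Q z (fun i => starRingEnd ℂ (z i))).re := by
  intro z
  set c : ℂ := eval z (p.map (algebraMap ℝ ℂ)) with hc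
  by_cases hc0 : c = 0
  · rw [hc0]
    simp only [norm_zero]
    have := h z
    rw [← hc, hc0] at this
    simpa using this
  · -- choose a on the unit circle with a ^ (2d) * c = |c|
    set θ : ℝ := Complex.arg c
    set a : ℂ := Complex.exp (((-(θ / (2 * d)) : ℝ) : ℂ) * Complex.I) with ha
    have hd2 : (2 * d : ℕ) ≠ 0 := by positivity
    have hapow : a ^ (2 * d) = Complex.exp (-θ * Complex.I) := by
      rw [ha, ← Complex.exp_nat_mul]
      congr 1
      have hdc : (d : ℂ) ≠ 0 := Nat.cast_ne_zero.mpr (by omega)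
      push_cast
      field_simp
    have hkey : a ^ (2 * d) * c = (‖c‖ : ℂ) := by
      rw [hapow]
      nth_rewrite 1 [← Complex.norm_mul_exp_arg_mul_I c]
      rw [show Complex.exp (-(θ:ℂ) * Complex.I) *
          ((‖c‖ : ℂ) * Complex.exp ((c.arg : ℂ) * Complex.I)) =
          (‖c‖ : ℂ) *
          (Complex.exp (-(θ:ℂ) * Complex.I) * Complex.exp ((c.arg : ℂ) * Complex.I)) from by
        ring, ← Complex.exp_add]
      simp [θ]
    have hph := hp.map (algebraMap ℝ ℂ)
    have heval : eval (a • z) (p.map (algebraMap ℝ ℂ)) = a ^ (2 * d) * c :=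
      eval_smul_of_isHomogeneous _ hph a z
    have hconj : (fun i => starRingEnd ℂ ((a • z) i)) =
        (starRingEnd ℂ a) • (fun i => starRingEnd ℂ (z i)) := by
      funext i; simp [Pi.smul_apply, smul_eq_mul, map_mul]
    have haa : a * starRingEnd ℂ a = 1 := by
      have habs : ‖a‖ = 1 := by
        rw [ha]; exact Complex.norm_exp_ofReal_mul_I _
      rw [Complex.mul_conj]
      norm_cast
      rw [Complex.normSq_eq_norm_sq, habs]; norm_num
    have hQeq : Q (a • z) (fun i => starRingEnd ℂ ((a • z) i)) =
        Q z (fun i => starRingEnd ℂ (z i)) := by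
      rw [hconj, hQ1, hQ2, ← mul_assoc, ← mul_pow, haa, one_pow, one_mul]
    have := h (a • z)
    rw [heval, hkey, hQeq] at this
    simpa using this
end
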